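/- arXiv:2407.10006 — 2 statements merged into one kernel-verified Lean document; each statement's English description precedes it below -/
import Mathlib

section
/- Let V be a finite type, let p : V → ℝ be a probability mass function, let C ≥ 1 be a natural number, and let c ≥ 0 be a real number. Suppose S is a finite subset of V with |S| = C − 1 such that p w ≤ p v for every v ∈ S and w ∉ S, and suppose ∑_{w ∉ S} p w ≥ c. Then the Shannon entropy satisfies H(p) = ∑_v (−p v · ln(p v)) ≥ c · ln C. -/
/-- If `S` consists of the `C - 1` largest values of a probability mass function `p`
on a finite type `V`, and the total mass outside `S` is at least `c ≥ 0`,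
then the Shannon entropy of `p` is at least `c * ln C`. -/
theorem entropy_ge_of_tail_mass (V : Type*) [Fintype V] [DecidableEq V] (p : V → ℝ)
    (hp0 : ∀ v, 0 ≤ p v) (hp1 : ∑ v, p v = 1) (C : ℕ) (hC : 1 ≤ C)
    (c : ℝ) (hc : 0 ≤ c)
    (S : Finset V) (hScard : S.card = C - 1)
    (hS : ∀ v ∈ S, ∀ w ∉ S, p w ≤ p v)
    (htail : c ≤ ∑ w ∈ Sᶜ, p w) :
    c * Real.log C ≤ ∑ v, -(p v * Real.log (p v)) := by
  have hlogC : 0 ≤ Real.log C := by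
    apply Real.log_nonneg
    exact_mod_cast hC
  -- each w ∉ S has p w ≤ 1/C
  have hkey : ∀ w ∉ S, (C : ℝ) * p w ≤ 1 := by
    intro w hw
    have h1 : ∑ v ∈ S, p w ≤ ∑ v ∈ S, p v :=
      Finset.sum_le_sum fun v hv => hS v hv w hw
    have h2 : ∑ v ∈ insert w S, p v ≤ ∑ v, p v := by
      apply Finset.sum_le_sum_of_subset_of_nonneg (Finset.subset_univ _)
      intro i _ _; exact hp0 i
    rw [Finset.sum_insert hw, hp1] at h2
    have h3 : ((C : ℝ) - 1) * p w ≤ ∑ v ∈ S, p v := by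
      rw [Finset.sum_const, hScard] at h1
      have : ((C - 1 : ℕ) : ℝ) = (C : ℝ) - 1 := by
        push_cast [hC]; ring
      calc ((C : ℝ) - 1) * p w = ((C - 1 : ℕ) : ℝ) * p w := by rw [this]
        _ ≤ ∑ v ∈ S, p v := by simpa [nsmul_eq_mul] using h1
    nlinarith [hp0 w]
  have hterm : ∀ w ∉ S, p w * Real.log C ≤ -(p w * Real.log (p w)) := by
    intro w hw
    rcases eq_or_lt_of_le (hp0 w) with h0 | h0
    · simp [← h0]
    · have hle : p w ≤ 1 / C := by
        rw [le_div_iff₀ (by positivity)]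
        linarith [hkey w hw, mul_comm (C : ℝ) (p w)]
      have : Real.log (p w) ≤ Real.log (1 / C) := Real.log_le_log h0 hle
      rw [Real.log_div one_ne_zero (by positivity), Real.log_one] at this
      nlinarith
  have hnn : ∀ v, 0 ≤ -(p v * Real.log (p v)) := by
    intro v
    rcases eq_or_lt_of_le (hp0 v) with h0 | h0
    · simp [← h0]
    · have hv1 : p v ≤ 1 := by
        have := Finset.single_le_sum (f := p) (fun i _ => hp0 i) (Finset.mem_univ v)
        linarith [hp1 ▸ this]
      have := Real.log_nonpos (le_of_lt h0) hv1
      nlinarith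
  calc c * Real.log C ≤ (∑ w ∈ Sᶜ, p w) * Real.log C := by
        apply mul_le_mul_of_nonneg_right htail hlogC
    _ = ∑ w ∈ Sᶜ, p w * Real.log C := Finset.sum_mul ..
    _ ≤ ∑ w ∈ Sᶜ, -(p w * Real.log (p w)) := by
        apply Finset.sum_le_sum
        intro w hw
        exact hterm w (Finset.mem_compl.mp hw)
    _ ≤ ∑ v, -(p v * Real.log (p v)) := by
        apply Finset.sum_le_sum_of_subset_of_nonneg (Finset.subset_univ _)
        intro i _ _; exact hnn i
end

section
/- Let V be a finite nonempty type, let p : V → ℝ be a probability mass function, let r ≥ 2 and C ≥ 1 be natural numbers, and let c₀ > 0 be a real number satisfying c₀ · ln C > 3 · ln r. If the Shannon entropy of p satisfies H(p) ≤ 3 · ln r, then there exists a finite subset S of V with |S| < C and ∑_{v ∈ S} p v ≥ 1 − c₀. -/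
/-- If a probability mass function `p` on a finite nonempty type has Shannon entropy
at most `3 * ln r`, and `c₀ * ln C > 3 * ln r` with `c₀ > 0`, then there is a set `S`
of fewer than `C` vertices carrying mass at least `1 - c₀`. -/
theorem exists_small_set_of_large_mass (V : Type*) [Fintype V] [Nonempty V]
    (p : V → ℝ) (hp0 : ∀ v, 0 ≤ p v) (hp1 : ∑ v, p v = 1)
    (r C : ℕ) (hr : 2 ≤ r) (hC : 1 ≤ C)
    (c₀ : ℝ) (hc₀ : 0 < c₀) (hgap : 3 * Real.log r < c₀ * Real.log C)
    (hent : ∑ v, -(p v * Real.log (p v)) ≤ 3 * Real.log r) :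
    ∃ S : Finset V, S.card < C ∧ 1 - c₀ ≤ ∑ v ∈ S, p v := by
  classical
  have hr1 : (1:ℝ) < r := by exact_mod_cast Nat.lt_of_lt_of_le one_lt_two hr
  have hlogr : 0 < Real.log r := Real.log_pos hr1
  have hlogC : 0 < Real.log C := by
    by_contra h
    push_neg at h
    have : c₀ * Real.log C ≤ 0 := mul_nonpos_of_nonneg_of_nonpos hc₀.le h
    linarith
  have hCpos : (0:ℝ) < C := by exact_mod_cast Nat.lt_of_lt_of_le Nat.zero_lt_one hC
  set S : Finset V := Finset.univ.filter (fun v => 1/(C:ℝ) < p v) with hS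
  -- each v has p v ≤ 1
  have hple1 : ∀ v, p v ≤ 1 := by
    intro v
    rw [← hp1]
    exact Finset.single_le_sum (fun i _ => hp0 i) (Finset.mem_univ v)
  -- mass on S is at most 1
  have hSle1 : ∑ v ∈ S, p v ≤ 1 := by
    rw [← hp1]
    exact Finset.sum_le_sum_of_subset_of_nonneg (Finset.subset_univ S)
      (fun i _ _ => hp0 i)
  -- card bound
  have hcard : S.card < C := by
    by_contra h
    push_neg at h
    have hne : S.Nonempty := Finset.card_pos.mp (lt_of_lt_of_le hC h)
    have h1 : ∑ _v ∈ S, 1/(C:ℝ) < ∑ v ∈ S, p v :=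
      Finset.sum_lt_sum_of_nonempty hne (fun v hv => (Finset.mem_filter.mp hv).2)
    rw [Finset.sum_const, nsmul_eq_mul] at h1
    have h2 : (1:ℝ) ≤ S.card * (1/(C:ℝ)) := by
      rw [mul_one_div, le_div_iff₀ hCpos, one_mul]
      exact_mod_cast h
    linarith
  refine ⟨S, hcard, ?_⟩
  -- per-element bound on complement
  have hkey : ∀ v ∈ Sᶜ, p v * Real.log C ≤ -(p v * Real.log (p v)) := by
    intro v hv
    have hvle : p v ≤ 1/(C:ℝ) := by
      have := Finset.mem_compl.mp hv
      simp only [hS, Finset.mem_filter, Finset.mem_univ, true_and, not_lt] at this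
      exact this
    rcases eq_or_lt_of_le (hp0 v) with h0 | h0
    · simp [← h0]
    · have hlog : Real.log C ≤ -Real.log (p v) := by
        rw [← Real.log_inv]
        apply Real.log_le_log hCpos
        rw [le_inv_comm₀ hCpos h0]
        rw [← one_div]; exact hvle
      calc p v * Real.log C ≤ p v * (-Real.log (p v)) :=
            mul_le_mul_of_nonneg_left hlog (hp0 v)
        _ = -(p v * Real.log (p v)) := by ring
  -- entropy terms are nonneg
  have hnonneg : ∀ v, 0 ≤ -(p v * Real.log (p v)) := by
    intro v
    have : Real.log (p v) ≤ 0 := Real.log_nonpos (hp0 v) (hple1 v)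
    nlinarith [hp0 v]
  have hsumSc : (∑ v ∈ Sᶜ, p v) * Real.log C ≤ 3 * Real.log r := by
    calc (∑ v ∈ Sᶜ, p v) * Real.log C = ∑ v ∈ Sᶜ, p v * Real.log C := by
          rw [Finset.sum_mul]
      _ ≤ ∑ v ∈ Sᶜ, -(p v * Real.log (p v)) := Finset.sum_le_sum hkey
      _ ≤ ∑ v, -(p v * Real.log (p v)) :=
          Finset.sum_le_sum_of_subset_of_nonneg (Finset.subset_univ _)
            (fun i _ _ => hnonneg i)
      _ ≤ 3 * Real.log r := hent
  have hScsmall : ∑ v ∈ Sᶜ, p v ≤ c₀ := by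
    by_contra h
    push_neg at h
    have : c₀ * Real.log C < (∑ v ∈ Sᶜ, p v) * Real.log C :=
      mul_lt_mul_of_pos_right h hlogC
    linarith
  have hsplit : ∑ v ∈ S, p v + ∑ v ∈ Sᶜ, p v = 1 := by
    rw [Finset.sum_add_sum_compl, hp1]
  linarith
end
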